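/- (At most |V| Bellman–Ford iterations are needed for the most reliable path, since only simple paths matter.) Assume w x y ≤ 1 for all x, y : V. Then for all vertices u, v : V, the supremum over all walks of any length of the product of edge probabilities along the walk equals the supremum restricted to walks of length at most Fintype.card V - 1: ⨆_{k : ℕ} ⨆ over all walks p of length k from u to v of ∏_{i=0}^{k-1} w (p i) (p (i+1)) = ⨆_{k ∈ Finset.range (Fintype.card V)} ⨆ over all walks p of length k from u to v of ∏_{i=0}^{k-1} w (p i) (p (i+1)), where the empty product for k = 0 is 1. -/

import Mathlib

open ENNReal

/-!
A walk that visits some vertex twice contains a closed subwalk; cutting it out gives a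
strictly shorter walk with the same endpoints, and since every edge weight is at most `1`
this can only increase the product of the weights. A walk of length at least `card V`
visits `card V + 1` vertices, so by pigeonhole it repeats one. Iterating, every walk is
dominated by one of length less than `card V`.
-/

open Finset

theorem iSup_eq_iSup_range_of_le_iSup_lt {α : Type*} [CompleteLattice α] {f : ℕ → α} {n : ℕ}
    (hf : ∀ k, n ≤ k → f k ≤ ⨆ j < k, f j) : ⨆ k, f k = ⨆ k ∈ range n, f k := by
  refine le_antisymm (iSup_le fun k => ?_) (iSup₂_le fun k _ => le_iSup f k)
  induction k using Nat.strong_induction_on with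
  | _ k ih =>
    rcases lt_or_ge k n with hkn | hnk
    · exact le_iSup₂_of_le k (mem_range.mpr hkn) le_rfl
    · exact (hf k hnk).trans (iSup₂_le fun j hj => ih j hj)

section PathWeight

variable {V M : Type*}

def pathWeight [CommMonoid M] (w : V → V → M) (P : ℕ → V) (k : ℕ) : M :=
  ∏ i ∈ range k, w (P i) (P (i + 1))

def spliceOut (P : ℕ → V) (a d : ℕ) : ℕ → V :=
  fun n => if n < a then P n else P (n + d)

section CommMonoid

variable [CommMonoid M] (w : V → V → M)

theorem pathWeight_add (P : ℕ → V) (m n : ℕ) :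
    pathWeight w P (m + n) = pathWeight w P m * pathWeight w (fun i => P (m + i)) n :=
  prod_range_add _ m n

theorem pathWeight_congr {P Q : ℕ → V} {k : ℕ} (h : ∀ i ≤ k, P i = Q i) :
    pathWeight w P k = pathWeight w Q k :=
  prod_congr rfl fun i hi => by
    have := mem_range.mp hi
    rw [h i (by omega), h (i + 1) (by omega)]

theorem prod_fin_eq_pathWeight (P : ℕ → V) (k : ℕ) :
    ∏ i : Fin k, w (P i.castSucc) (P i.succ) = pathWeight w P k :=
  Fin.prod_univ_eq_prod_range (fun i => w (P i) (P (i + 1))) k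

end CommMonoid

section OrderedMonoid

variable [CommMonoid M] [Preorder M] [MulLeftMono M] {w : V → V → M}

theorem pathWeight_le_one (hw : ∀ x y, w x y ≤ 1) (P : ℕ → V) (k : ℕ) : pathWeight w P k ≤ 1 :=
  prod_le_one' fun _ _ => hw _ _

theorem pathWeight_le_spliceOut (hw : ∀ x y, w x y ≤ 1) {P : ℕ → V} {a d : ℕ}
    (hP : P a = P (a + d)) (m : ℕ) :
    pathWeight w P (a + d + m) ≤ pathWeight w (spliceOut P a d) (a + m) := by
  have hprefix : pathWeight w (spliceOut P a d) a = pathWeight w P a :=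
    pathWeight_congr w fun i hi => by
      rcases hi.lt_or_eq with hi | rfl
      · simp [spliceOut, hi]
      · simp [spliceOut, hP]
  have hsuffix : (fun i => spliceOut P a d (a + i)) = fun i => P (a + d + i) := by
    funext i
    simp only [spliceOut, show ¬a + i < a by omega, if_false]
    congr 1
    omega
  calc pathWeight w P (a + d + m)
      = pathWeight w P a * (pathWeight w (fun i => P (a + i)) d *
          pathWeight w (fun i => P (a + d + i)) m) := by
        rw [add_assoc, pathWeight_add, pathWeight_add]
        simp only [add_assoc]
    _ ≤ pathWeight w P a * pathWeight w (fun i => P (a + d + i)) m :=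
        mul_le_mul_right (mul_le_of_le_one_left' (pathWeight_le_one hw _ _)) _
    _ = pathWeight w (spliceOut P a d) (a + m) := by
        rw [pathWeight_add, hprefix, hsuffix]

theorem exists_shorter_pathWeight_ge [Fintype V] (hw : ∀ x y, w x y ≤ 1) (P : ℕ → V) {k : ℕ}
    (hk : Fintype.card V ≤ k) :
    ∃ j < k, ∃ Q : ℕ → V, Q 0 = P 0 ∧ Q j = P k ∧ pathWeight w P k ≤ pathWeight w Q j := by
  have hcard : #(univ : Finset V) < #(range (k + 1)) := by simpa using Nat.lt_succ_of_le hk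
  obtain ⟨x, hx, y, hy, hxy, hPxy⟩ :=
    exists_ne_map_eq_of_card_lt_of_maps_to hcard fun i _ => mem_univ (P i)
  rw [mem_range] at hx hy
  obtain ⟨a, d, m, hd, rfl, hP⟩ :
      ∃ a d m, 0 < d ∧ k = a + d + m ∧ P a = P (a + d) := by
    rcases hxy.lt_or_gt with h | h
    · exact ⟨x, y - x, k - y, by omega, by omega, by rwa [Nat.add_sub_cancel' h.le]⟩
    · exact ⟨y, x - y, k - x, by omega, by omega, by rw [Nat.add_sub_cancel' h.le, hPxy]⟩
  refine ⟨a + m, by omega, spliceOut P a d, ?_, ?_, pathWeight_le_spliceOut hw hP m⟩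
  · rcases Nat.eq_zero_or_pos a with rfl | ha
    · simp [spliceOut, hP]
    · simp [spliceOut, ha]
  · simp only [spliceOut, show ¬a + m < a by omega, if_false]
    congr 1
    omega

end OrderedMonoid

theorem iSup_finWalk_eq_iSup_pathWeight [CompleteLattice M] [CommMonoid M] (w : V → V → M)
    (u v : V) (k : ℕ) :
    (⨆ p : {p : Fin (k + 1) → V // p 0 = u ∧ p (Fin.last k) = v},
        ∏ i : Fin k, w (p.1 i.castSucc) (p.1 i.succ)) =
      ⨆ P : {P : ℕ → V // P 0 = u ∧ P k = v}, pathWeight w P.1 k := by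
  refine le_antisymm (iSup_le fun ⟨p, hp0, hpk⟩ => ?_) (iSup_le fun ⟨P, hP0, hPk⟩ => ?_)
  · have hclamp : ∀ i : Fin (k + 1), Fin.clamp i k = i := fun i =>
      Fin.ext (min_eq_left (Nat.le_of_lt_succ i.2))
    refine le_iSup_of_le ⟨fun n => p (Fin.clamp n k), ?_, ?_⟩ ?_
    · simpa [Fin.clamp] using hp0
    · exact (congrArg p (Fin.ext (min_self k))).trans hpk
    · simp only [← prod_fin_eq_pathWeight, hclamp, le_refl]
  · refine le_iSup_of_le ⟨fun i => P i, hP0, hPk⟩ ?_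
    exact (prod_fin_eq_pathWeight w P k).ge

end PathWeight

theorem most_reliable_path_restricted_to_simple_paths {V : Type*} [Fintype V]
    (w : Matrix V V ℝ≥0∞) (hw : ∀ x y : V, w x y ≤ 1) (u v : V) :
    (⨆ k : ℕ, ⨆ p : {p : Fin (k + 1) → V // p 0 = u ∧ p (Fin.last k) = v},
        ∏ i : Fin k, w (p.1 i.castSucc) (p.1 i.succ)) =
      ⨆ k ∈ Finset.range (Fintype.card V),
        ⨆ p : {p : Fin (k + 1) → V // p 0 = u ∧ p (Fin.last k) = v},
          ∏ i : Fin k, w (p.1 i.castSucc) (p.1 i.succ) := by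
  simp only [iSup_finWalk_eq_iSup_pathWeight w u v]
  refine iSup_eq_iSup_range_of_le_iSup_lt fun k hk => iSup_le fun ⟨P, hP0, hPk⟩ => ?_
  obtain ⟨j, hjk, Q, hQ0, hQj, hPQ⟩ := exists_shorter_pathWeight_ge hw P hk
  exact le_iSup₂_of_le j hjk (le_iSup_of_le ⟨Q, hQ0.trans hP0, hQj.trans hPk⟩ hPQ)
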